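/- arXiv:2502.01269 — 2 statements merged into one kernel-verified Lean document; each statement's English description precedes it below -/
import Mathlib

section
/- Let a ∈ ℝ, b < 0, c > 0 and consider y' = a·y + b·√y + c, y(0) = 1 (with a, b, c derived from p ∈ (0,1): a = p(r + (μ−r)²/(2σ²(1−p))), b = −p√(3(1−p)σ²γ)/(2π), c = γp/2). The right-hand side g(y) = a y + b√y + c is locally Lipschitz on (0, ∞), and the ODE admits a unique positive solution defined on all of [0, ∞). -/
/-!
In the coordinate `u = log y` the equation `y' = a y + b √y + c` becomes
`u' = a + b e^{-u/2} + c e^{-u}`, whose right-hand side is bounded and Lipschitz on every half-line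
`[μ, ∞)`. Freezing it below a level `μ ≤ 0` at which it is positive (such `μ` exists because
`c > 0`) gives a bounded, globally Lipschitz field, for which Picard–Lindelöf on `[-n, n]` and
uniqueness glue to a global solution `u`. Since the frozen field is positive below `μ`, `u` never
drops below `μ`, so `y = e^u` solves the original equation. Uniqueness among positive solutions
holds because `g` is Lipschitz on `[m, ∞)` for each `m > 0` and a positive solution is bounded
away from `0` on each compact `[0, t]`.
-/

open Set Filter Topology NNReal Real

section GlobalExistence

variable {E : Type*} [NormedAddCommGroup E] [NormedSpace ℝ E] {F : E → E} {K L : ℝ≥0}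

theorem exists_forall_mem_Ioo_hasDerivAt_of_lipschitzWith_of_norm_le [CompleteSpace E]
    (hF : LipschitzWith K F) (hL : ∀ x, ‖F x‖ ≤ L) (x₀ : E) (T : ℝ≥0) :
    ∃ α : ℝ → E, α 0 = x₀ ∧ ∀ t ∈ Ioo (-(T : ℝ)) T, HasDerivAt α (F (α t)) t := by
  have hPL : IsPicardLindelof (fun _ ↦ F) (tmin := -T) (tmax := T) ⟨0, by simp⟩ x₀ (L * T) 0 L K :=
    { lipschitzOnWith := fun _ _ ↦ hF.lipschitzOnWith
      continuousOn := fun _ _ ↦ continuousOn_const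
      norm_le := fun _ _ x _ ↦ hL x
      mul_max_le := by simp }
  obtain ⟨α, hα0, hα⟩ := hPL.exists_eq_forall_mem_Icc_hasDerivWithinAt₀
  exact ⟨α, hα0, fun t ht ↦ (hα t (Ioo_subset_Icc_self ht)).hasDerivAt (Icc_mem_nhds ht.1 ht.2)⟩

theorem exists_forall_hasDerivAt_of_forall_nat (hF : LipschitzWith K F) {x₀ : E}
    (hloc : ∀ n : ℕ, ∃ α : ℝ → E, α 0 = x₀ ∧ ∀ t ∈ Ioo (-(n : ℝ)) n, HasDerivAt α (F (α t)) t) :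
    ∃ u : ℝ → E, u 0 = x₀ ∧ ∀ t, HasDerivAt u (F (u t)) t := by
  choose α hα0 hα using hloc
  have hagree : ∀ m n, m ≤ n → EqOn (α m) (α n) (Ioo (-(m : ℝ)) m) := by
    intro m n hmn
    rcases m.eq_zero_or_pos with rfl | hm
    · simp
    have hmn' : (m : ℝ) ≤ n := by exact_mod_cast hmn
    have hm' : (0 : ℝ) < m := by exact_mod_cast hm
    exact ODE_solution_unique_of_mem_Ioo (v := fun _ ↦ F) (s := fun _ ↦ univ)
      (fun _ _ ↦ hF.lipschitzOnWith) (t₀ := 0) ⟨by linarith, hm'⟩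
      (fun t ht ↦ ⟨hα m t ht, trivial⟩)
      (fun t ht ↦ ⟨hα n t ⟨by linarith [ht.1], by linarith [ht.2]⟩, trivial⟩)
      ((hα0 m).trans (hα0 n).symm)
  set N : ℝ → ℕ := fun t ↦ ⌊|t|⌋₊ + 1
  have hN : ∀ t, |t| < N t := fun t ↦ by simpa [N] using Nat.lt_floor_add_one |t|
  refine ⟨fun t ↦ α (N t) t, hα0 _, fun t ↦ ?_⟩
  have ht : t ∈ Ioo (-((N t + 1 : ℕ) : ℝ)) (N t + 1 : ℕ) := abs_lt.mp ((hN t).trans (by simp))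
  have heq : (fun τ ↦ α (N τ) τ) =ᶠ[𝓝 t] α (N t + 1) := by
    filter_upwards [Ioo_mem_nhds ht.1 ht.2] with τ hτ
    have hfloor : ⌊|τ|⌋₊ < N t + 1 := (Nat.floor_lt (abs_nonneg τ)).mpr (abs_lt.mpr hτ)
    exact hagree _ _ hfloor (abs_lt.mp (hN τ))
  show HasDerivAt _ (F (α (N t) t)) t
  rw [heq.eq_of_nhds]
  exact (hα _ t ht).congr_of_eventuallyEq heq

theorem exists_forall_hasDerivAt_of_lipschitzWith_of_norm_le [CompleteSpace E]
    (hF : LipschitzWith K F) (hL : ∀ x, ‖F x‖ ≤ L) (x₀ : E) :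
    ∃ u : ℝ → E, u 0 = x₀ ∧ ∀ t, HasDerivAt u (F (u t)) t :=
  exists_forall_hasDerivAt_of_forall_nat hF fun n ↦ by
    simpa using exists_forall_mem_Ioo_hasDerivAt_of_lipschitzWith_of_norm_le hF hL x₀ n

end GlobalExistence

theorem le_of_hasDerivAt_of_eq_imp_pos {f f' : ℝ → ℝ} {a m : ℝ}
    (hf : ∀ t ≥ a, HasDerivAt f (f' t) t) (ha : m ≤ f a) (hpos : ∀ t ≥ a, f t = m → 0 < f' t)
    {t : ℝ} (ht : a ≤ t) : m ≤ f t :=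
  image_le_of_deriv_right_lt_deriv_boundary' (f' := fun _ ↦ 0) continuousOn_const
    (fun _ _ ↦ hasDerivWithinAt_const _ _ _) ha
    (fun x hx ↦ (hf x hx.1).continuousAt.continuousWithinAt)
    (fun x hx ↦ (hf x hx.1).hasDerivWithinAt) (fun x hx h ↦ hpos x hx.1 h.symm) ⟨ht, le_rfl⟩

theorem LipschitzOnWith.of_hasDerivWithinAt_abs_le {f f' : ℝ → ℝ} {s : Set ℝ} {C : ℝ}
    (hs : Convex ℝ s) (hf : ∀ x ∈ s, HasDerivWithinAt f (f' x) s x) (hC : ∀ x ∈ s, |f' x| ≤ C) :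
    LipschitzOnWith C.toNNReal f s :=
  hs.lipschitzOnWith_of_nnnorm_hasDerivWithin_le hf fun x hx ↦ by
    rw [← NNReal.coe_le_coe, coe_nnnorm, Real.norm_eq_abs, Real.coe_toNNReal']
    exact le_max_of_le_left (hC x hx)

noncomputable def affineSqrt (a b c y : ℝ) : ℝ := a * y + b * √y + c

noncomputable def logAffineSqrt (a b c u : ℝ) : ℝ := a + b * exp (-u / 2) + c * exp (-u)

theorem lipschitzOnWith_affineSqrt_Ici (a b c : ℝ) {m : ℝ} (hm : 0 < m) :
    LipschitzOnWith (|a| + |b| / (2 * √m)).toNNReal (affineSqrt a b c) (Ici m) := by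
  refine .of_hasDerivWithinAt_abs_le (convex_Ici m) (f' := fun y ↦ a + b * (1 / (2 * √y)))
    (fun y hy ↦ ?_) fun y hy ↦ ?_
  · have hy0 : y ≠ 0 := (hm.trans_le hy).ne'
    exact ((((hasDerivAt_id y).const_mul a).add ((hasDerivAt_sqrt hy0).const_mul b)).add_const
      c).hasDerivWithinAt.congr_deriv (by simp)
  · have hsqrt : √m ≤ √y := sqrt_le_sqrt hy
    have hm' : 0 < √m := sqrt_pos.mpr hm
    calc |a + b * (1 / (2 * √y))| ≤ |a| + |b| * (1 / (2 * √y)) := by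
          simpa [abs_mul, abs_of_pos (hm'.trans_le hsqrt)] using abs_add_le a (b * (1 / (2 * √y)))
      _ ≤ |a| + |b| / (2 * √m) := by
          rw [mul_one_div]
          gcongr

theorem exp_mul_logAffineSqrt (a b c u : ℝ) :
    exp u * logAffineSqrt a b c u = affineSqrt a b c (exp u) := by
  rw [logAffineSqrt, affineSqrt, ← exp_half]
  have h1 : exp u * exp (-u / 2) = exp (u / 2) := by rw [← exp_add]; ring_nf
  have h2 : exp u * exp (-u) = 1 := by rw [← exp_add]; simp
  linear_combination b * h1 + c * h2

theorem lipschitzOnWith_logAffineSqrt_Ici (a b c μ : ℝ) :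
    LipschitzOnWith (|b| / 2 * exp (-μ / 2) + |c| * exp (-μ)).toNNReal (logAffineSqrt a b c)
      (Ici μ) := by
  refine .of_hasDerivWithinAt_abs_le (convex_Ici μ)
    (f' := fun u ↦ b * (exp (-u / 2) * (-1 / 2)) + c * (exp (-u) * (-1))) (fun u _ ↦ ?_)
    fun u hu ↦ ?_
  · exact (((((hasDerivAt_id u).neg.div_const 2).exp.const_mul b).const_add a).add
      ((hasDerivAt_id u).neg.exp.const_mul c)).hasDerivWithinAt
  · have h1 : exp (-u / 2) ≤ exp (-μ / 2) := exp_le_exp.mpr (by linarith [mem_Ici.mp hu])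
    have h2 : exp (-u) ≤ exp (-μ) := exp_le_exp.mpr (by linarith [mem_Ici.mp hu])
    refine (abs_add_le _ _).trans ?_
    simp only [abs_mul, abs_neg, abs_one, abs_div, abs_two, abs_of_pos (exp_pos _), mul_one]
    linarith [mul_le_mul_of_nonneg_left h1 (abs_nonneg b),
      mul_le_mul_of_nonneg_left h2 (abs_nonneg c)]

theorem abs_logAffineSqrt_le (a b c : ℝ) {μ u : ℝ} (hu : μ ≤ u) :
    |logAffineSqrt a b c u| ≤ |a| + |b| * exp (-μ / 2) + |c| * exp (-μ) := by
  have h1 : exp (-u / 2) ≤ exp (-μ / 2) := exp_le_exp.mpr (by linarith)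
  have h2 : exp (-u) ≤ exp (-μ) := exp_le_exp.mpr (by linarith)
  refine (abs_add_le _ _).trans (add_le_add ((abs_add_le _ _).trans ?_) ?_)
  · rw [abs_mul, abs_of_pos (exp_pos _)]
    gcongr
  · rw [abs_mul, abs_of_pos (exp_pos _)]
    gcongr

theorem exists_nonpos_logAffineSqrt_pos (a b : ℝ) {c : ℝ} (hc : 0 < c) :
    ∃ μ ≤ 0, 0 < logAffineSqrt a b c μ := by
  have hlim : Tendsto (fun u ↦ affineSqrt a b c (exp u)) atBot (𝓝 c) := by
    have hcont : Continuous (affineSqrt a b c) := by unfold affineSqrt; fun_prop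
    have h := (hcont.tendsto 0).comp tendsto_exp_atBot
    rwa [show affineSqrt a b c 0 = c by simp [affineSqrt]] at h
  obtain ⟨μ, hμ, hμ0⟩ := ((hlim.eventually (lt_mem_nhds hc)).and (eventually_le_atBot 0)).exists
  refine ⟨μ, hμ0, pos_of_mul_pos_right ?_ (exp_pos μ).le⟩
  rwa [exp_mul_logAffineSqrt]

theorem exists_pos_hasDerivAt_affineSqrt (a b : ℝ) {c : ℝ} (hc : 0 < c) :
    ∃ y : ℝ → ℝ, y 0 = 1 ∧ ∀ t ≥ 0, 0 < y t ∧ HasDerivAt y (affineSqrt a b c (y t)) t := by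
  obtain ⟨μ, hμ0, hμ⟩ := exists_nonpos_logAffineSqrt_pos a b hc
  set H : ℝ → ℝ := fun u ↦ logAffineSqrt a b c (max u μ)
  have hH : LipschitzWith _ H := lipschitzOnWith_univ.mp <|
    (lipschitzOnWith_logAffineSqrt_Ici a b c μ).comp (LipschitzWith.id.max_const μ).lipschitzOnWith
      fun u _ ↦ le_max_right u μ
  have hHbdd (u : ℝ) : ‖H u‖ ≤ (|a| + |b| * exp (-μ / 2) + |c| * exp (-μ)).toNNReal :=
    (abs_logAffineSqrt_le a b c (le_max_right u μ)).trans (le_coe_toNNReal _)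
  obtain ⟨u, hu0, hu⟩ := exists_forall_hasDerivAt_of_lipschitzWith_of_norm_le hH hHbdd 0
  have hμu {t : ℝ} (ht : 0 ≤ t) : μ ≤ u t :=
    le_of_hasDerivAt_of_eq_imp_pos (fun t _ ↦ hu t) (by rwa [hu0])
      (fun t _ h ↦ by simpa [H, h] using hμ) ht
  refine ⟨fun t ↦ exp (u t), by simp [hu0], fun t ht ↦ ⟨exp_pos _, ?_⟩⟩
  have hderiv := (hu t).exp
  rwa [show H (u t) = logAffineSqrt a b c (u t) by simp [H, hμu ht], exp_mul_logAffineSqrt]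
    at hderiv

theorem ODE_solution_unique_Ici_of_pos {g : ℝ → ℝ}
    (hg : ∀ m > 0, ∃ K, LipschitzOnWith K g (Ici m)) {y z : ℝ → ℝ} (h0 : y 0 = z 0)
    (hy : ∀ t ≥ 0, 0 < y t ∧ HasDerivAt y (g (y t)) t)
    (hz : ∀ t ≥ 0, 0 < z t ∧ HasDerivAt z (g (z t)) t) : EqOn y z (Ici 0) := by
  intro t ht
  have hcont : ContinuousOn (fun τ ↦ min (y τ) (z τ)) (Icc 0 t) := fun τ hτ ↦
    (ContinuousAt.inf (hy τ hτ.1).2.continuousAt (hz τ hτ.1).2.continuousAt).continuousWithinAt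
  obtain ⟨τ, hτ, hmin⟩ := isCompact_Icc.exists_isMinOn (nonempty_Icc.mpr ht) hcont
  obtain ⟨K, hK⟩ := hg _ (lt_min (hy τ hτ.1).1 (hz τ hτ.1).1)
  refine ODE_solution_unique_of_mem_Icc_right (v := fun _ ↦ g) (s := fun _ ↦ Ici _)
    (fun _ _ ↦ hK)
    (fun s hs ↦ (hy s hs.1).2.continuousAt.continuousWithinAt)
    (fun s hs ↦ (hy s hs.1).2.hasDerivWithinAt)
    (fun s hs ↦ mem_Ici.mpr <| le_trans (hmin (Ico_subset_Icc_self hs)) (min_le_left _ _))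
    (fun s hs ↦ (hz s hs.1).2.continuousAt.continuousWithinAt)
    (fun s hs ↦ (hz s hs.1).2.hasDerivWithinAt)
    (fun s hs ↦ mem_Ici.mpr <| le_trans (hmin (Ico_subset_Icc_self hs)) (min_le_right _ _))
    h0 ⟨ht, le_rfl⟩

theorem stmt_18_general (γ p : ℝ) (hγ : 0 < γ)
    (hp : 0 < p)
    (a b c : ℝ)
    (hc : c = γ * p / 2)
    (g : ℝ → ℝ) (hg : ∀ y, g y = a * y + b * Real.sqrt y + c) :
    (∀ y ∈ Set.Ioi (0 : ℝ), ∃ u ∈ nhds y, ∃ K : NNReal, LipschitzOnWith K g u) ∧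
    (∃ y : ℝ → ℝ,
      y 0 = 1 ∧
      (∀ t, 0 ≤ t → 0 < y t) ∧
      (∀ t, 0 ≤ t → HasDerivAt y (g (y t)) t) ∧
      (∀ z : ℝ → ℝ, z 0 = 1 → (∀ t, 0 ≤ t → 0 < z t) →
        (∀ t, 0 ≤ t → HasDerivAt z (g (z t)) t) →
        ∀ t, 0 ≤ t → z t = y t)) := by
  obtain rfl : g = affineSqrt a b c := funext hg
  have hlip (m : ℝ) (hm : 0 < m) := lipschitzOnWith_affineSqrt_Ici a b c hm
  refine ⟨fun y hy ↦ ⟨Ici (y / 2), Ici_mem_nhds (half_lt_self hy), _, hlip _ (half_pos hy)⟩, ?_⟩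
  obtain ⟨y, hy0, hy⟩ := exists_pos_hasDerivAt_affineSqrt a b (by rw [hc]; positivity : 0 < c)
  refine ⟨y, hy0, fun t ht ↦ (hy t ht).1, fun t ht ↦ (hy t ht).2, fun z hz0 hzpos hz t ht ↦ ?_⟩
  exact ODE_solution_unique_Ici_of_pos (fun m hm ↦ ⟨_, hlip m hm⟩) (hz0.trans hy0.symm)
    (fun s hs ↦ ⟨hzpos s hs, hz s hs⟩) hy ht

theorem stmt_18 (r μ σ γ p : ℝ) (hσ : 0 < σ) (hγ : 0 < γ)
    (hp : 0 < p) (hp1 : p < 1)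
    (a b c : ℝ)
    (ha : a = p * (r + (μ - r) ^ 2 / (2 * σ ^ 2 * (1 - p))))
    (hb : b = -(p * Real.sqrt (3 * (1 - p) * σ ^ 2 * γ)) / (2 * Real.pi))
    (hc : c = γ * p / 2)
    (g : ℝ → ℝ) (hg : ∀ y, g y = a * y + b * Real.sqrt y + c) :
    (∀ y ∈ Set.Ioi (0 : ℝ), ∃ u ∈ nhds y, ∃ K : NNReal, LipschitzOnWith K g u) ∧
    (∃ y : ℝ → ℝ,
      y 0 = 1 ∧
      (∀ t, 0 ≤ t → 0 < y t) ∧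
      (∀ t, 0 ≤ t → HasDerivAt y (g (y t)) t) ∧
      (∀ z : ℝ → ℝ, z 0 = 1 → (∀ t, 0 ≤ t → 0 < z t) →
        (∀ t, 0 ≤ t → HasDerivAt z (g (z t)) t) →
        ∀ t, 0 ≤ t → z t = y t)) :=
  stmt_18_general γ p hγ hp a b c hc g hg
end

section
/- For α > 0, A > 0 and the Tsallis entropy integrand H_β(z) = (z − z^β)/(β − 1) with β = 3, i.e. H₃(z) = (z − z³)/2, the maximizer over probability densities π on ℝ of ∫ (−A(u − θ)²)π(u) du + α ∫ H₃(π(u)) du is, by the first-order condition, of the form π̂(u) = c·√((K − A(u−θ)²)₊), a semicircle density on an interval centered at θ, for constants c, K > 0 determined by normalization. -/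
open MeasureTheory Real

lemma ptwise (α m z zs : ℝ) (hα : 0 < α) (hz : 0 ≤ z)
    (hzs : zs = Real.sqrt (2/(3*α)) * Real.sqrt (max m 0)) :
    m * z - α/2 * z^3 ≤ m * zs - α/2 * zs^3 ∧
    (m * z - α/2 * z^3 = m * zs - α/2 * zs^3 → z = zs) := by
  have hzs0 : 0 ≤ zs := by rw [hzs]; positivity
  rcases le_or_gt m 0 with hm | hm
  · have hzs' : zs = 0 := by
      rw [hzs, max_eq_right hm, Real.sqrt_zero, mul_zero]
    subst hzs'
    constructor
    · nlinarith [pow_nonneg hz 3, mul_nonpos_of_nonpos_of_nonneg hm hz]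
    · intro h
      by_contra hne
      have hzpos : 0 < z := lt_of_le_of_ne hz (Ne.symm hne)
      nlinarith [pow_pos hzpos 3, mul_nonpos_of_nonpos_of_nonneg hm hz]
  · have hmx : max m 0 = m := max_eq_left hm.le
    have hzsq : zs^2 = 2/(3*α) * m := by
      rw [hzs, hmx, mul_pow, Real.sq_sqrt (by positivity), Real.sq_sqrt hm.le]
    have hm' : m = 3*α/2 * zs^2 := by
      field_simp at hzsq ⊢; linarith
    have hzspos : 0 < zs := by
      rw [hzs, hmx]
      exact mul_pos (Real.sqrt_pos.mpr (by positivity)) (Real.sqrt_pos.mpr hm)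
    constructor
    · nlinarith [sq_nonneg (zs - z), mul_nonneg (sq_nonneg (zs - z)) hz,
        mul_nonneg (sq_nonneg (zs - z)) hzspos.le]
    · intro h
      have h2 : α/2 * ((zs - z)^2 * (2*zs + z)) = 0 := by
        linear_combination (z - zs) * hm' - h
      have h3 : (zs - z)^2 * (2*zs + z) = 0 := by
        have : α/2 ≠ 0 := by positivity
        exact (mul_eq_zero.mp h2).resolve_left this
      have h4 : (zs - z)^2 = 0 := by
        rcases mul_eq_zero.mp h3 with h' | h'
        · exact h'
        · nlinarith
      have := pow_eq_zero_iff (n := 2) (by norm_num) |>.mp h4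
      linarith [sub_eq_zero.mp this]

lemma semicircle : ∫ x : ℝ, Real.sqrt (max (1 - x^2) 0) = π/2 := by
  have hz : ∀ x ∉ Set.Icc (-1:ℝ) 1, Real.sqrt (max (1 - x^2) 0) = 0 := by
    intro x hx
    have h1 : 1 - x^2 ≤ 0 := by
      simp only [Set.mem_Icc, not_and_or, not_le] at hx
      rcases hx with h | h <;> nlinarith
    rw [max_eq_right h1, Real.sqrt_zero]
  rw [← setIntegral_eq_integral_of_forall_compl_eq_zero hz, integral_Icc_eq_integral_Ioc,
    ← intervalIntegral.integral_of_le (by norm_num : (-1:ℝ) ≤ 1), ← integral_sqrt_one_sub_sq]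
  apply intervalIntegral.integral_congr
  intro x hx
  rw [Set.uIcc_of_le (by norm_num : (-1:ℝ) ≤ 1)] at hx
  have h0 : 0 ≤ 1 - x^2 := by nlinarith [hx.1, hx.2]
  simp only [max_eq_left h0]

lemma norm_int (A K θ : ℝ) (hA : 0 < A) (hK : 0 < K) :
    ∫ u : ℝ, Real.sqrt (max (K - A*(u-θ)^2) 0) = K / Real.sqrt A * (π/2) := by
  have h1 : ∫ u : ℝ, Real.sqrt (max (K - A*(u-θ)^2) 0)
      = ∫ v : ℝ, Real.sqrt (max (K - A*v^2) 0) :=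
    integral_sub_right_eq_self (fun v => Real.sqrt (max (K - A*v^2) 0)) θ
  set a := Real.sqrt (A/K) with ha
  have hapos : 0 < a := Real.sqrt_pos.mpr (by positivity)
  have ha2 : a^2 = A/K := Real.sq_sqrt (by positivity)
  have h2 : ∀ v : ℝ, Real.sqrt (max (K - A*v^2) 0)
      = Real.sqrt K * Real.sqrt (max (1 - (a*v)^2) 0) := by
    intro v
    rw [← Real.sqrt_mul hK.le, mul_max_of_nonneg _ _ hK.le, mul_zero]
    have : K * (1 - (a*v)^2) = K - A*v^2 := by
      rw [mul_pow, ha2]; field_simp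
    rw [this]
  simp_rw [h1, h2]
  rw [MeasureTheory.integral_const_mul]
  rw [MeasureTheory.Measure.integral_comp_mul_left (fun x => Real.sqrt (max (1 - x^2) 0)) a]
  rw [semicircle, smul_eq_mul, abs_of_nonneg (by positivity : (0:ℝ) ≤ a⁻¹)]
  have hainv : a⁻¹ = Real.sqrt (K/A) := by rw [ha, ← Real.sqrt_inv, inv_div]
  have hKA : Real.sqrt K * Real.sqrt (K/A) = K / Real.sqrt A := by
    rw [Real.sqrt_div hK.le, ← mul_div_assoc, Real.mul_self_sqrt hK.le]
  rw [hainv, ← mul_assoc, hKA]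

theorem stmt_19 (A α θ : ℝ) (hA : 0 < A) (hα : 0 < α)
    (π₀ : ℝ → ℝ)
    (hπ₀nn : ∀ u, 0 ≤ π₀ u)
    (hπ₀int : Integrable π₀)
    (hπ₀norm : ∫ u, π₀ u = 1)
    (hπ₀int1 : Integrable (fun u => -(A * (u - θ) ^ 2) * π₀ u))
    (hπ₀int2 : Integrable (fun u => (π₀ u - (π₀ u) ^ 3) / 2))
    (hmax : ∀ ρ : ℝ → ℝ, (∀ u, 0 ≤ ρ u) → Integrable ρ → (∫ u, ρ u) = 1 →
      Integrable (fun u => -(A * (u - θ) ^ 2) * ρ u) →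
      Integrable (fun u => (ρ u - (ρ u) ^ 3) / 2) →
      (∫ u, (-(A * (u - θ) ^ 2) * ρ u + α * ((ρ u - (ρ u) ^ 3) / 2))) ≤
        ∫ u, (-(A * (u - θ) ^ 2) * π₀ u + α * ((π₀ u - (π₀ u) ^ 3) / 2))) :
    ∃ c K : ℝ, 0 < c ∧ 0 < K ∧
      ∀ᵐ u, π₀ u = c * Real.sqrt (max (K - A * (u - θ) ^ 2) 0) := by
  have hπ : (0:ℝ) < π := Real.pi_pos
  set c : ℝ := Real.sqrt (2/(3*α)) with hc_def
  have hc : 0 < c := Real.sqrt_pos.mpr (by positivity)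
  set K : ℝ := 2 * Real.sqrt A / (c * π) with hK_def
  have hsA : 0 < Real.sqrt A := Real.sqrt_pos.mpr hA
  have hK : 0 < K := by positivity
  set ρ : ℝ → ℝ := fun u => c * Real.sqrt (max (K - A * (u - θ) ^ 2) 0) with hρ_def
  refine ⟨c, K, hc, hK, ?_⟩
  -- basic properties of ρ
  have hρnn : ∀ u, 0 ≤ ρ u := fun u => by positivity
  have hρcont : Continuous ρ := by
    apply continuous_const.mul
    exact Real.continuous_sqrt.comp (((continuous_const.sub
      (continuous_const.mul ((continuous_id.sub continuous_const).pow 2)))).max continuous_const)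
  set R : ℝ := Real.sqrt (K/A) with hR_def
  have hR2 : R^2 = K/A := Real.sq_sqrt (by positivity)
  have hvanish : ∀ u ∉ Set.Icc (θ - R) (θ + R), ρ u = 0 := by
    intro u hu
    simp only [Set.mem_Icc, not_and_or, not_le] at hu
    have h1 : K - A * (u - θ)^2 ≤ 0 := by
      have hRnn : 0 ≤ R := Real.sqrt_nonneg _
      have hlt : R^2 < (u - θ)^2 := by
        rcases hu with h | h
        · nlinarith
        · nlinarith
      rw [hR2] at hlt
      have hKlt : K < A * (u - θ)^2 := by
        calc K = A * (K/A) := by field_simp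
        _ < A * (u - θ)^2 := mul_lt_mul_of_pos_left hlt hA
      linarith
    simp only [hρ_def, max_eq_right h1, Real.sqrt_zero, mul_zero]
  have hcs : HasCompactSupport ρ := HasCompactSupport.intro isCompact_Icc hvanish
  have hρint : Integrable ρ := hρcont.integrable_of_hasCompactSupport hcs
  have hρint1 : Integrable (fun u => -(A * (u - θ) ^ 2) * ρ u) := by
    apply Continuous.integrable_of_hasCompactSupport
    · exact (continuous_const.mul ((continuous_id.sub continuous_const).pow 2)).neg.mul hρcont
    · apply HasCompactSupport.intro isCompact_Icc
      intro u hu; rw [hvanish u hu, mul_zero]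
  have hρint2 : Integrable (fun u => (ρ u - (ρ u) ^ 3) / 2) := by
    apply Continuous.integrable_of_hasCompactSupport
    · exact ((hρcont.sub (hρcont.pow 3)).div_const 2)
    · apply HasCompactSupport.intro isCompact_Icc
      intro u hu; rw [hvanish u hu]; norm_num
  have hρnorm : ∫ u, ρ u = 1 := by
    rw [hρ_def]
    simp only
    rw [MeasureTheory.integral_const_mul, norm_int A K θ hA hK]
    rw [hK_def]
    field_simp
  -- apply maximality
  have hle := hmax ρ hρnn hρint hρnorm hρint1 hρint2
  -- pointwise comparison function
  set h : ℝ → ℝ := fun u =>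
    ((-(A * (u - θ) ^ 2) * ρ u + α * ((ρ u - (ρ u) ^ 3) / 2)) - (α/2 - K) * ρ u)
    - ((-(A * (u - θ) ^ 2) * π₀ u + α * ((π₀ u - (π₀ u) ^ 3) / 2)) - (α/2 - K) * π₀ u)
    with hh_def
  have hptw : ∀ u, (K - A * (u - θ)^2) * π₀ u - α/2 * (π₀ u)^3
      ≤ (K - A * (u - θ)^2) * ρ u - α/2 * (ρ u)^3 ∧
      ((K - A * (u - θ)^2) * π₀ u - α/2 * (π₀ u)^3
        = (K - A * (u - θ)^2) * ρ u - α/2 * (ρ u)^3 → π₀ u = ρ u) := by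
    intro u
    exact ptwise α (K - A * (u - θ)^2) (π₀ u) (ρ u) hα (hπ₀nn u) rfl
  have hhnn : ∀ u, 0 ≤ h u := by
    intro u
    have := (hptw u).1
    simp only [hh_def]
    nlinarith [this]
  have Iρ2 : Integrable (fun u => α * ((ρ u - (ρ u) ^ 3) / 2)) volume := hρint2.const_mul α
  have Iρc : Integrable (fun u => (α/2 - K) * ρ u) volume := hρint.const_mul _
  have Iρφ : Integrable (fun u => -(A * (u - θ) ^ 2) * ρ u + α * ((ρ u - (ρ u) ^ 3) / 2)) volume :=
    hρint1.add Iρ2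
  have IρG : Integrable (fun u =>
      (-(A * (u - θ) ^ 2) * ρ u + α * ((ρ u - (ρ u) ^ 3) / 2)) - (α/2 - K) * ρ u) volume :=
    Iρφ.sub Iρc
  have Iπ2 : Integrable (fun u => α * ((π₀ u - (π₀ u) ^ 3) / 2)) volume := hπ₀int2.const_mul α
  have Iπc : Integrable (fun u => (α/2 - K) * π₀ u) volume := hπ₀int.const_mul _
  have Iπφ : Integrable (fun u => -(A * (u - θ) ^ 2) * π₀ u + α * ((π₀ u - (π₀ u) ^ 3) / 2)) volume :=
    hπ₀int1.add Iπ2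
  have IπG : Integrable (fun u =>
      (-(A * (u - θ) ^ 2) * π₀ u + α * ((π₀ u - (π₀ u) ^ 3) / 2)) - (α/2 - K) * π₀ u) volume :=
    Iπφ.sub Iπc
  have hhint : Integrable h := IρG.sub IπG
  have hintval : ∫ u, h u ≤ 0 := by
    have e1 : ∫ u, h u =
        ((∫ u, (-(A * (u - θ) ^ 2) * ρ u + α * ((ρ u - (ρ u) ^ 3) / 2))) - (α/2 - K) * ∫ u, ρ u)
        - ((∫ u, (-(A * (u - θ) ^ 2) * π₀ u + α * ((π₀ u - (π₀ u) ^ 3) / 2))) - (α/2 - K) * ∫ u, π₀ u) := by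
      simp only [hh_def]
      rw [integral_sub IρG IπG, integral_sub Iρφ Iρc, integral_sub Iπφ Iπc,
        MeasureTheory.integral_const_mul, MeasureTheory.integral_const_mul,
        MeasureTheory.integral_const_mul]
    rw [e1, hρnorm, hπ₀norm]
    linarith [hle]
  have hint0 : ∫ u, h u = 0 :=
    le_antisymm hintval (integral_nonneg hhnn)
  have hae : h =ᵐ[volume] 0 :=
    (integral_eq_zero_iff_of_nonneg hhnn hhint).mp hint0
  filter_upwards [hae] with u hu
  have hu0 : h u = 0 := hu
  apply (hptw u).2
  simp only [hh_def] at hu0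
  nlinarith [hu0]
end
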